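/- For circular Nim CN(5,2), the set of P-positions is exactly the set of positions that, up to rotation and reflection of the 5-cycle, have the form (M, m, c, d, m) where M + m = c + d and M is the maximum stack height of the position. -/

import Mathlib

/-- A legal move in SetNim: at least one stack strictly decreases, all changed
stacks lie in some allowed move set, stacks weakly decrease. -/
def Move {V : Type} (A : Set (Set V)) (p q : V → ℕ) : Prop :=
  q ≠ p ∧ (∀ i, q i ≤ p i) ∧ ∃ a ∈ A, ∀ i, q i ≠ p i → i ∈ a

/-- P-positions: positions all of whose options are N-positions. -/
def PPos {V : Type} [Fintype V] (A : Set (Set V)) (p : V → ℕ) : Prop :=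
  ∀ q, Move A p q → ¬ PPos A q
termination_by Finset.univ.sum p
decreasing_by
  rename_i hq
  obtain ⟨hne, hle, -⟩ := hq
  refine Finset.sum_lt_sum (fun i _ => hle i) ?_
  obtain ⟨i, hi⟩ := Function.ne_iff.mp hne
  exact ⟨i, Finset.mem_univ i, lt_of_le_of_ne (hle i) hi⟩

/-- Move sets of circular Nim CN(5,2): two consecutive stacks. -/
def CN52 : Set (Set (Fin 5)) := {s | ∃ i : Fin 5, s = {i, i + 1}}

/-- The dihedral symmetries of the 5-cycle: rotations (s = false) and
reflections (s = true). -/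
def dih5 (k : Fin 5) (s : Bool) : Fin 5 → Fin 5 := fun i => if s then k - i else k + i

/-!
The positions of the form `(M, m, c, d, m)` (up to symmetry) form a kernel of the move graph, so
by induction on the number of tokens they are exactly the P-positions. No move joins two such
positions: after a rotation the move touches stacks `0, 1`, and the pattern equations of the
two positions, read against the three untouched stacks, force the move to be trivial. Conversely,
from any other position, after a symmetry putting a maximal stack at `0` and its smaller neighbour
at `4`, a case analysis on the stacks `2, 3, 4` exhibits a move onto such a position.
-/

section SetNim

variable {V : Type} {A : Set (Set V)}

theorem Move.sum_lt [Fintype V] {p q : V → ℕ} (h : Move A p q) : ∑ i, q i < ∑ i, p i := by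
  obtain ⟨hne, hle, -⟩ := h
  obtain ⟨i, hi⟩ := Function.ne_iff.mp hne
  exact Finset.sum_lt_sum (fun i _ => hle i) ⟨i, Finset.mem_univ i, (hle i).lt_of_ne hi⟩

theorem Move.comp {W : Type} {B : Set (Set W)} {p q : V → ℕ} (h : Move A p q) {σ : W → V}
    (hσ : σ.Surjective) (hAB : ∀ a ∈ A, ∃ b ∈ B, σ ⁻¹' a ⊆ b) : Move B (p ∘ σ) (q ∘ σ) := by
  obtain ⟨hne, hle, a, ha, hsub⟩ := h
  obtain ⟨b, hb, hab⟩ := hAB a ha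
  exact ⟨fun h => hne (hσ.injective_comp_right h), fun i => hle (σ i), b, hb,
    fun i hi => hab (hsub (σ i) hi)⟩

theorem pPos_iff_of_stable_of_absorbing [Fintype V] {S : (V → ℕ) → Prop}
    (hstable : ∀ p q, S p → Move A p q → ¬ S q)
    (habsorbing : ∀ p, ¬ S p → ∃ q, Move A p q ∧ S q) (p : V → ℕ) : PPos A p ↔ S p := by
  induction hn : ∑ i, p i using Nat.strong_induction_on generalizing p with
  | _ n ih =>
    have ih' : ∀ q, Move A p q → (PPos A q ↔ S q) := fun q hq => ih _ (hn ▸ hq.sum_lt) q rfl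
    rw [PPos]
    constructor
    · intro hP
      by_contra hS
      obtain ⟨q, hq, hSq⟩ := habsorbing p hS
      exact hP q hq ((ih' q hq).mpr hSq)
    · exact fun hS q hq hPq => hstable p q hS hq ((ih' q hq).mp hPq)

end SetNim

theorem dih5_comp (k k' : Fin 5) (s s' : Bool) :
    dih5 k s ∘ dih5 k' s' = dih5 (if s then k - k' else k + k') (s ^^ s') := by
  funext i
  cases s <;> cases s' <;>
    simp only [dih5, Function.comp_apply, Bool.false_eq_true, ↓reduceIte, Bool.xor_false,
      Bool.xor_true, Bool.not_true, Bool.not_false] <;>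
    abel

theorem dih5_zero_false : dih5 0 false = id := by
  funext i
  simp [dih5]

theorem exists_dih5_comp_eq_id (k : Fin 5) (s : Bool) : ∃ k' s', dih5 k s ∘ dih5 k' s' = id :=
  ⟨if s then k else -k, s, by cases s <;> simp [dih5_comp, dih5_zero_false]⟩

theorem dih5_surjective (k : Fin 5) (s : Bool) : (dih5 k s).Surjective := by
  obtain ⟨k', s', h⟩ := exists_dih5_comp_eq_id k s
  exact fun i => ⟨dih5 k' s' i, congrFun h i⟩

theorem exists_preimage_dih5_subset_cn52 (k : Fin 5) (s : Bool) :
    ∀ a ∈ CN52, ∃ b ∈ CN52, dih5 k s ⁻¹' a ⊆ b := by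
  rintro _ ⟨i, rfl⟩
  refine ⟨_, ⟨if s then k - i - 1 else i - k, rfl⟩, fun j hj => ?_⟩
  simp only [Set.mem_preimage, Set.mem_insert_iff, Set.mem_singleton_iff] at hj ⊢
  revert k s i j
  decide

theorem Move.comp_dih5 {p q : Fin 5 → ℕ} (h : Move CN52 p q) (k : Fin 5) (s : Bool) :
    Move CN52 (p ∘ dih5 k s) (q ∘ dih5 k s) :=
  h.comp (dih5_surjective k s) (exists_preimage_dih5_subset_cn52 k s)

def IsBasePattern (p : Fin 5 → ℕ) : Prop :=
  (∀ i, p i ≤ p 0) ∧ p 1 = p 4 ∧ p 0 + p 1 = p 2 + p 3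

def IsPattern (p : Fin 5 → ℕ) : Prop :=
  ∃ k s, IsBasePattern (p ∘ dih5 k s)

theorem IsPattern.comp_dih5 {p : Fin 5 → ℕ} (h : IsPattern p) (k : Fin 5) (s : Bool) :
    IsPattern (p ∘ dih5 k s) := by
  obtain ⟨k₀, s₀, h⟩ := h
  obtain ⟨k', s', hinv⟩ := exists_dih5_comp_eq_id k s
  refine ⟨if s' then k' - k₀ else k' + k₀, s' ^^ s₀, ?_⟩
  rwa [← dih5_comp, ← Function.comp_assoc, Function.comp_assoc p, hinv, Function.comp_id]

theorem isPattern_comp_dih5_iff {p : Fin 5 → ℕ} (k : Fin 5) (s : Bool) :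
    IsPattern (p ∘ dih5 k s) ↔ IsPattern p := by
  refine ⟨fun h => ?_, fun h => h.comp_dih5 k s⟩
  obtain ⟨k', s', hinv⟩ := exists_dih5_comp_eq_id k s
  simpa [Function.comp_assoc, hinv] using h.comp_dih5 k' s'

def IsPatternTuple (a b c d e : ℕ) : Prop :=
  (b ≤ a ∧ c ≤ a ∧ d ≤ a ∧ e ≤ a) ∧ b = e ∧ a + b = c + d

theorem isPatternTuple_reflect_iff {a b c d e : ℕ} :
    IsPatternTuple a b c d e ↔ IsPatternTuple a e d c b := by
  unfold IsPatternTuple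
  omega

theorem isBasePattern_comp_dih5_iff (p : Fin 5 → ℕ) (k : Fin 5) (s : Bool) :
    IsBasePattern (p ∘ dih5 k s) ↔
      IsPatternTuple (p k) (p (k + 1)) (p (k + 2)) (p (k + 3)) (p (k + 4)) := by
  cases s
  · simp [IsBasePattern, IsPatternTuple, dih5, Fin.forall_fin_succ]
  · have h₁ : k - 1 = k + 4 := by grind
    have h₂ : k - 2 = k + 3 := by grind
    have h₃ : k - 3 = k + 2 := by grind
    have h₄ : k - 4 = k + 1 := by grind
    rw [isPatternTuple_reflect_iff]
    simp [IsBasePattern, IsPatternTuple, dih5, Fin.forall_fin_succ, h₁, h₂, h₃, h₄]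

theorem isPattern_iff (p : Fin 5 → ℕ) :
    IsPattern p ↔
      IsPatternTuple (p 0) (p 1) (p 2) (p 3) (p 4) ∨ IsPatternTuple (p 1) (p 2) (p 3) (p 4) (p 0) ∨
      IsPatternTuple (p 2) (p 3) (p 4) (p 0) (p 1) ∨ IsPatternTuple (p 3) (p 4) (p 0) (p 1) (p 2) ∨
      IsPatternTuple (p 4) (p 0) (p 1) (p 2) (p 3) := by
  simp [IsPattern, isBasePattern_comp_dih5_iff, Fin.exists_fin_succ]

theorem Move.exists_cn52_pair {p q : Fin 5 → ℕ} (h : Move CN52 p q) :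
    ∃ j, q j ≤ p j ∧ q (j + 1) ≤ p (j + 1) ∧ (q j ≠ p j ∨ q (j + 1) ≠ p (j + 1)) ∧
      q (j + 2) = p (j + 2) ∧ q (j + 3) = p (j + 3) ∧ q (j + 4) = p (j + 4) := by
  obtain ⟨hne, hle, _, ⟨j, rfl⟩, hsub⟩ := h
  have fixed : ∀ i, i ≠ j → i ≠ j + 1 → q i = p i := fun i h₀ h₁ =>
    by_contra fun hi => by simpa [h₀, h₁] using hsub i hi
  refine ⟨j, hle j, hle (j + 1), ?_, fixed _ ?_ ?_, fixed _ ?_ ?_, fixed _ ?_ ?_⟩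
  · by_contra! hc
    refine hne (funext fun i => ?_)
    by_cases h₀ : i = j
    · exact h₀ ▸ hc.1
    by_cases h₁ : i = j + 1
    · exact h₁ ▸ hc.2
    exact fixed i h₀ h₁
  all_goals simp

theorem IsPattern.not_of_move {p q : Fin 5 → ℕ} (hp : IsPattern p) (h : Move CN52 p q) :
    ¬ IsPattern q := by
  obtain ⟨j, h₀, h₁, hne, h₂, h₃, h₄⟩ := h.exists_cn52_pair
  rw [← isPattern_comp_dih5_iff j false] at hp ⊢
  simp only [isPattern_iff, IsPatternTuple, Function.comp, dih5, Bool.false_eq_true, ↓reduceIte,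
    add_zero] at hp ⊢
  omega

theorem move_cn52_of_le {p q : Fin 5 → ℕ} (j : Fin 5) (hle : ∀ i, q i ≤ p i)
    (hlt : q j < p j ∨ q (j + 1) < p (j + 1)) (hfix : ∀ i, i ≠ j → i ≠ j + 1 → q i = p i) :
    Move CN52 p q := by
  refine ⟨fun h => ?_, hle, _, ⟨j, rfl⟩, fun i hi => ?_⟩
  · subst h
    omega
  · by_contra hij
    simp only [Set.mem_insert_iff, Set.mem_singleton_iff, not_or] at hij
    exact hi (hfix i hij.1 hij.2)

section Vec

variable {a b c d e a' b' c' e' : ℕ}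

theorem move_cn52_vec₀₁ (ha : a' ≤ a) (hb : b' ≤ b) (hlt : a' < a ∨ b' < b) :
    Move CN52 ![a, b, c, d, e] ![a', b', c, d, e] :=
  move_cn52_of_le 0 (by simp [Fin.forall_fin_succ, *]) (by simpa using hlt)
    (by simp [Fin.forall_fin_succ])

theorem move_cn52_vec₁₂ (hb : b' ≤ b) (hc : c' ≤ c) (hlt : b' < b ∨ c' < c) :
    Move CN52 ![a, b, c, d, e] ![a, b', c', d, e] :=
  move_cn52_of_le 1 (by simp [Fin.forall_fin_succ, *]) (by simpa using hlt)
    (by simp [Fin.forall_fin_succ])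

theorem move_cn52_vec₄₀ (he : e' ≤ e) (ha : a' ≤ a) (hlt : e' < e ∨ a' < a) :
    Move CN52 ![a, b, c, d, e] ![a', b, c, d, e'] :=
  move_cn52_of_le 4 (by simp [Fin.forall_fin_succ, *]) (by simpa using hlt)
    (by simp [Fin.forall_fin_succ])

theorem isPattern_vec_iff :
    IsPattern ![a, b, c, d, e] ↔ IsPatternTuple a b c d e ∨ IsPatternTuple b c d e a ∨
      IsPatternTuple c d e a b ∨ IsPatternTuple d e a b c ∨ IsPatternTuple e a b c d :=
  isPattern_iff _

theorem exists_move_isPattern_of_lt (hd : d ≤ a) (heb : e ≤ b) (hcd : c < d) (hce : c < e) :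
    ∃ q, Move CN52 ![a, b, c, d, e] q ∧ IsPattern q := by
  by_cases hbc : d + e ≤ b + c
  · exact ⟨![c, d + e - c, c, d, e], move_cn52_vec₀₁ (by omega) (by omega) (by omega),
      isPattern_vec_iff.2 (by unfold IsPatternTuple; omega)⟩
  rcases le_or_gt d b with hdb | hbd
  · exact ⟨![c, b, c, d, b + c - d], move_cn52_vec₄₀ (by omega) (by omega) (by omega),
      isPattern_vec_iff.2 (by unfold IsPatternTuple; omega)⟩
  · exact ⟨![c + d - b, b, c, d, c], move_cn52_vec₄₀ (by omega) (by omega) (by omega),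
      isPattern_vec_iff.2 (by unfold IsPatternTuple; omega)⟩

theorem exists_move_isPattern_of_max (hn : ¬ IsPattern ![a, b, c, d, e]) (hb : b ≤ a)
    (hc : c ≤ a) (hd : d ≤ a) (heb : e ≤ b) : ∃ q, Move CN52 ![a, b, c, d, e] q ∧ IsPattern q := by
  by_cases hacde : a + e ≤ c + d
  · have hn₀ : ¬ IsPatternTuple a b c d e := fun h => hn (isPattern_vec_iff.2 (.inl h))
    unfold IsPatternTuple at hn₀
    exact ⟨![a, e, a + e - d, d, e], move_cn52_vec₁₂ (by omega) (by omega) (by omega),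
      isPattern_vec_iff.2 (by unfold IsPatternTuple; omega)⟩
  by_cases hecd : e ≤ c ∧ e ≤ d
  · exact ⟨![c + d - e, e, c, d, e], move_cn52_vec₀₁ (by omega) (by omega) (by omega),
      isPattern_vec_iff.2 (by unfold IsPatternTuple; omega)⟩
  rcases lt_or_ge c d with hcd | hdc
  · exact exists_move_isPattern_of_lt hd heb hcd (by omega)
  rcases le_or_gt c e with hce | hec
  · exact ⟨![d, d + e - c, c, d, e], move_cn52_vec₀₁ (by omega) (by omega) (by omega),
      isPattern_vec_iff.2 (by unfold IsPatternTuple; omega)⟩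
  · exact ⟨![c + d - e, d, c, d, e], move_cn52_vec₀₁ (by omega) (by omega) (by omega),
      isPattern_vec_iff.2 (by unfold IsPatternTuple; omega)⟩

end Vec

theorem exists_move_isPattern (p : Fin 5 → ℕ) (hn : ¬ IsPattern p) :
    ∃ q, Move CN52 p q ∧ IsPattern q := by
  obtain ⟨k, hk⟩ := Finite.exists_max p
  obtain ⟨s, hs⟩ : ∃ s, (p ∘ dih5 k s) 4 ≤ (p ∘ dih5 k s) 1 := by
    rcases le_total (p (k + 4)) (p (k + 1)) with h | h
    · exact ⟨false, h⟩
    · have hk₄ : k - 4 = k + 1 := by grind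
      have hk₁ : k - 1 = k + 4 := by grind
      exact ⟨true, by simpa [dih5, hk₄, hk₁] using h⟩
  have hvec : ∃ a b c d e, p ∘ dih5 k s = ![a, b, c, d, e] :=
    ⟨_, _, _, _, _, (FinVec.etaExpand_eq _).symm⟩
  obtain ⟨a, b, c, d, e, hp⟩ := hvec
  have hmax : ∀ i, (p ∘ dih5 k s) i ≤ (p ∘ dih5 k s) 0 := fun i => by
    simpa [dih5] using hk (dih5 k s i)
  have hn' : ¬ IsPattern ![a, b, c, d, e] := by rwa [← hp, isPattern_comp_dih5_iff]
  rw [hp] at hmax hs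
  obtain ⟨q, hmove, hq⟩ := exists_move_isPattern_of_max hn' (hmax 1) (hmax 2) (hmax 3) hs
  obtain ⟨k', s', hinv⟩ := exists_dih5_comp_eq_id k s
  refine ⟨q ∘ dih5 k' s', ?_, hq.comp_dih5 k' s'⟩
  simpa [← hp, Function.comp_assoc, hinv] using hmove.comp_dih5 k' s'

theorem cn52_ppos (p : Fin 5 → ℕ) :
    PPos CN52 p ↔ ∃ (k : Fin 5) (s : Bool),
      (∀ i, p (dih5 k s i) ≤ p (dih5 k s 0)) ∧
      p (dih5 k s 1) = p (dih5 k s 4) ∧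
      p (dih5 k s 0) + p (dih5 k s 1) = p (dih5 k s 2) + p (dih5 k s 3) :=
  pPos_iff_of_stable_of_absorbing (fun _ _ hp => IsPattern.not_of_move hp) exists_move_isPattern p
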